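/- Let $f:X\to Y$ be a continuous map between convenient spaces. If $Y$ is paracompact, then $\mathrm{asecat}(f)\leq \mathrm{secat}(f)$, where $\mathrm{secat}(f)$ is the classical sectional category (Schwarz genus) of $f$. -/

import Mathlib

open scoped unitInterval

noncomputable section

universe u v


/-- Presentations of probability measures with finite support: a tuple of points
together with a point of the standard simplex. This is the disjoint union
`⨆ₙ Xⁿ × Δ^{n-1}`. -/
def PreProb (X : Type u) [TopologicalSpace X] : Type u :=
  Σ n : ℕ, (Fin (n + 1) → X) × (stdSimplex ℝ (Fin (n + 1)))

instance (X : Type u) [TopologicalSpace X] : TopologicalSpace (PreProb X) :=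
  inferInstanceAs (TopologicalSpace (Σ n : ℕ, (Fin (n + 1) → X) × (stdSimplex ℝ (Fin (n + 1)))))

/-- The space of probability measures with finite support, encoded as finitely
supported real-valued functions that are nonnegative and sum to `1`.  Its topology
(defined below) is coinduced from the space of presentations, i.e. it is the quotient
topology of the paper. -/
def FinProb (X : Type u) [TopologicalSpace X] : Type u :=
  { w : X →₀ ℝ // (∀ x, 0 ≤ w x) ∧ w.sum (fun _ t => t) = 1 }

/-- The quotient map from presentations to finitely supported probability measures,
`(x₁,…,xₙ,t₁,…,tₙ) ↦ ∑ tᵢ δ_{xᵢ}`. -/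
def PreProb.toFinProb {X : Type u} [TopologicalSpace X] (p : PreProb X) : FinProb X := by
  classical
  refine ⟨∑ i, Finsupp.single (p.2.1 i) ((p.2.2 : Fin (p.1 + 1) → ℝ) i), ?_, ?_⟩
  · intro x
    rw [Finsupp.finset_sum_apply]
    refine Finset.sum_nonneg fun i _ => ?_
    rw [Finsupp.single_apply]
    split
    · exact p.2.2.2.1 i
    · exact le_refl 0
  · rw [← Finsupp.sum_finset_sum_index (fun _ => rfl) (fun _ _ _ => rfl)]
    simpa [Finsupp.sum_single_index] using p.2.2.2.2

/-- The quotient topology on the space of probability measures with finite support. -/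
instance FinProb.instTopologicalSpace (X : Type u) [TopologicalSpace X] :
    TopologicalSpace (FinProb X) :=
  TopologicalSpace.coinduced PreProb.toFinProb inferInstance

/-- The weight that a finitely supported probability measure assigns to a point. -/
def FinProb.weight {X : Type u} [TopologicalSpace X] (μ : FinProb X) (x : X) : ℝ := μ.1 x

/-- The support of a finitely supported probability measure, as a finset. -/
def FinProb.supp {X : Type u} [TopologicalSpace X] (μ : FinProb X) : Finset X := μ.1.support

/-- `𝒫ₙ(X)`: the subspace of measures supported on at most `n` points. -/
def FinProbLe (X : Type u) [TopologicalSpace X] (n : ℕ) : Set (FinProb X) :=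
  { μ | μ.supp.card ≤ n }

/-- Covariant functoriality: the pushforward `f₊ : 𝒫(X) → 𝒫(Y)`,
`∑ tᵢ δ_{xᵢ} ↦ ∑ tᵢ δ_{f xᵢ}`. -/
def FinProb.map {X : Type u} {Y : Type v} [TopologicalSpace X] [TopologicalSpace Y]
    (f : X → Y) (μ : FinProb X) : FinProb Y := by
  classical
  refine ⟨Finsupp.mapDomain f μ.1, ?_, ?_⟩
  · intro y
    rw [Finsupp.mapDomain, Finsupp.sum_apply]
    refine Finset.sum_nonneg fun x _ => ?_
    dsimp only
    rw [Finsupp.single_apply]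
    split
    · exact μ.2.1 x
    · exact le_refl 0
  · rw [Finsupp.sum_mapDomain_index (fun _ => rfl) (fun _ _ _ => rfl)]
    exact μ.2.2

/-- The Dirac measure `δ_x`, i.e. the unit `η` of the monad `𝒫`. -/
def FinProb.dirac {X : Type u} [TopologicalSpace X] (x : X) : FinProb X := by
  classical
  refine ⟨Finsupp.single x 1, ?_, ?_⟩
  · intro y
    rw [Finsupp.single_apply]
    split
    · exact zero_le_one
    · exact le_refl 0
  · rw [Finsupp.sum_single_index rfl]

/-- `𝒫(f)`: the space of `f`-relative probability measures of finite support, i.e. those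
measures on `X` whose support is mapped by `f` to a single point of `Y`. -/
def FinProbRel {X : Type u} {Y : Type v} [TopologicalSpace X] (f : X → Y) :
    Set (FinProb X) :=
  { μ | ∃ y : Y, f '' ↑μ.supp = {y} }

/-- The projection `p : 𝒫(f) → Y`, sending a relative measure to the unique point of
`f(supp μ)`. -/
def FinProbRel.proj {X : Type u} {Y : Type v} [TopologicalSpace X] (f : X → Y)
    (μ : FinProbRel f) : Y :=
  Exists.choose μ.2

/-- The projection `𝒫(f) → Y` admits a continuous section with image in `𝒫_{n+1}(f)`. -/
def HasAnalogSec {X : Type u} {Y : Type v} [TopologicalSpace X] [TopologicalSpace Y]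
    (f : X → Y) (n : ℕ) : Prop :=
  ∃ s : Y → FinProbRel f, Continuous s ∧ (∀ y, FinProbRel.proj f (s y) = y) ∧
    ∀ y, (s y : FinProb X).supp.card ≤ n + 1

/-- The analog sectional category of a map: the least `n` such that the projection
`𝒫(f) → Y` admits a continuous section with image in `𝒫_{n+1}(f)` (`⊤` if there is
no such `n`). -/
def asecat {X : Type u} {Y : Type v} [TopologicalSpace X] [TopologicalSpace Y]
    (f : X → Y) : ℕ∞ :=
  sInf { n : ℕ∞ | ∃ m : ℕ, (m : ℕ∞) = n ∧ HasAnalogSec f m }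

/-- Evaluation of paths at the `r` equally spaced times `i/(r-1)`, `0 ≤ i < r`:
the fibration `π_X^r : X^{[0,1]} → X^r`. -/
def pathEval (X : Type u) [TopologicalSpace X] (r : ℕ) : C(I, X) → (Fin r → X) :=
  fun γ i => γ (Set.projIcc (0 : ℝ) 1 zero_le_one ((i : ℝ) / ((r : ℝ) - 1)))

/-- The based path space `(X, x₀)^{([0,1],{0})}`. -/
def BasedPaths (X : Type u) [TopologicalSpace X] (x₀ : X) : Type u :=
  { γ : C(I, X) // γ 0 = x₀ }

instance (X : Type u) [TopologicalSpace X] (x₀ : X) : TopologicalSpace (BasedPaths X x₀) :=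
  inferInstanceAs (TopologicalSpace { γ : C(I, X) // γ 0 = x₀ })

/-- Evaluation at `1` on the based path space. -/
def basedPathEval (X : Type u) [TopologicalSpace X] (x₀ : X) : BasedPaths X x₀ → X :=
  fun γ => γ.1 1

/-- The analog (LS-)category of a space. -/
def acat (X : Type u) [TopologicalSpace X] (x₀ : X) : ℕ∞ :=
  asecat (basedPathEval X x₀)

/-- The `r`-th sequential analog topological complexity; `ATC₁ = acat`. -/
def ATC (X : Type u) [TopologicalSpace X] (x₀ : X) (r : ℕ) : ℕ∞ :=
  if r = 1 then acat X x₀ else asecat (pathEval X r)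

/-- Classical sectional category data: `f` admits continuous sections over each of
`n + 1` open sets covering `Y`. -/
def HasSecCover {X : Type u} {Y : Type v} [TopologicalSpace X] [TopologicalSpace Y]
    (f : X → Y) (n : ℕ) : Prop :=
  ∃ U : Fin (n + 1) → Set Y, (∀ i, IsOpen (U i)) ∧ (⋃ i, U i) = Set.univ ∧
    ∀ i, ∃ s : U i → X, Continuous s ∧ ∀ y : U i, f (s y) = (y : Y)

/-- The classical sectional category (Schwarz genus) of a map. -/
def secat {X : Type u} {Y : Type v} [TopologicalSpace X] [TopologicalSpace Y]
    (f : X → Y) : ℕ∞ :=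
  sInf { n : ℕ∞ | ∃ m : ℕ, (m : ℕ∞) = n ∧ HasSecCover f m }

/-- The classical Lusternik–Schnirelmann category (normalized: `cat(point) = 0`). -/
def catLS (X : Type u) [TopologicalSpace X] (x₀ : X) : ℕ∞ :=
  secat (basedPathEval X x₀)

/-- The classical `r`-th sequential topological complexity. -/
def seqTC (X : Type u) [TopologicalSpace X] (x₀ : X) (r : ℕ) : ℕ∞ :=
  if r = 1 then catLS X x₀ else secat (pathEval X r)

/-- The cohomological dimension of a group `G`: the least `n` (possibly `⊤`) such that the
group cohomology `Hᵏ(G; M)` vanishes for all `G`-modules `M` and all `k > n`. -/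
def groupCd (G : Type) [Group G] : ℕ∞ :=
  sInf { n : ℕ∞ | ∀ (M : Rep ℤ G) (k : ℕ), n < (k : ℕ∞) → Subsingleton (groupCohomology M k) }

/-- `B` (with basepoint `b`) is a classifying space for the discrete group `G`: a convenient
(compactly generated Hausdorff), path-connected, aspherical space with fundamental group `G`
and the homotopy type of a CW complex; this characterizes the geometric realization of the
nerve of `G` up to homotopy equivalence. -/
structure IsClassifyingSpace (G : Type) [Group G] (B : Type u) [TopologicalSpace B]
    (b : B) : Prop where
  t2 : T2Space B
  compactlyGenerated : CompactlyGeneratedSpace B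
  pathConnected : PathConnectedSpace B
  aspherical : ∀ n : ℕ, 2 ≤ n → Subsingleton (HomotopyGroup (Fin n) B b)
  pi1 : Nonempty (FundamentalGroup B b ≃* G)
  cwType : ∃ K : TopCat.{u}, Nonempty (TopCat.CWComplex K) ∧ Nonempty (ContinuousMap.HomotopyEquiv B K)

/-- A covering map of degree `k`: every fiber has exactly `k` points. -/
def IsCoveringOfDegree {E : Type u} {X : Type v} [TopologicalSpace E] [TopologicalSpace X]
    (p : E → X) (k : ℕ) : Prop :=
  IsCoveringMap p ∧ ∀ x, (p ⁻¹' {x}).encard = (k : ℕ∞)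

/-- Hurewicz fibration: the homotopy lifting property with respect to all spaces. -/
def IsHurewiczFibration {E : Type u} {B : Type v} [TopologicalSpace E] [TopologicalSpace B]
    (p : E → B) : Prop :=
  ∀ (Z : Type max u v) (_ : TopologicalSpace Z) (H : C(Z × I, B)) (h : C(Z, E)),
    (∀ z, p (h z) = H (z, 0)) →
      ∃ L : C(Z × I, E), (∀ z, L (z, 0) = h z) ∧ ∀ q, p (L q) = H q

/- A cover of `Y` by `n + 1` open sets with local sections `sᵢ`, together with a subordinate
partition of unity `φᵢ`, gives the global section `y ↦ ∑ φᵢ(y) δ_{sᵢ(y)}` of `𝒫(f) → Y`,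
supported on at most `n + 1` points. Off `Uᵢ` any point of the fibre may stand in for `sᵢ(y)`:
its weight vanishes near every such `y`, so locally the section lifts continuously to
presentations. -/

namespace PreProb

variable {X : Type u} [TopologicalSpace X]

theorem continuous_toFinProb : Continuous (toFinProb (X := X)) :=
  continuous_coinduced_rng

theorem toFinProb_val (p : PreProb X) :
    (toFinProb p).1 = ∑ i, Finsupp.single (p.2.1 i) (p.2.2.1 i) :=
  rfl

theorem exists_eq_of_mem_supp_toFinProb {p : PreProb X} {x : X}
    (hx : x ∈ (toFinProb p).supp) : ∃ i, p.2.1 i = x := by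
  have hx' : (toFinProb p).1 x ≠ 0 := Finsupp.mem_support_iff.mp hx
  rw [toFinProb_val, Finsupp.finsetSum_apply] at hx'
  obtain ⟨i, -, hi⟩ := Finset.exists_ne_zero_of_sum_ne_zero hx'
  exact ⟨i, by_contra fun h => hi (Finsupp.single_eq_of_ne (Ne.symm h))⟩

theorem card_supp_toFinProb_le (p : PreProb X) : (toFinProb p).supp.card ≤ p.1 + 1 := by
  classical
  calc (toFinProb p).supp.card ≤ (Finset.univ.image p.2.1).card :=
        Finset.card_le_card fun x hx => by
          obtain ⟨i, rfl⟩ := exists_eq_of_mem_supp_toFinProb hx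
          exact Finset.mem_image_of_mem _ (Finset.mem_univ i)
    _ ≤ p.1 + 1 := Finset.card_image_le.trans (Finset.card_fin _).le

theorem toFinProb_congr_of_weight_ne_zero {n : ℕ} {x x' : Fin (n + 1) → X}
    {w : stdSimplex ℝ (Fin (n + 1))} (h : ∀ i, w.1 i ≠ 0 → x i = x' i) :
    toFinProb ⟨n, x, w⟩ = toFinProb ⟨n, x', w⟩ := by
  refine Subtype.ext
    (?_ : ∑ i, Finsupp.single (x i) (w.1 i) = ∑ i, Finsupp.single (x' i) (w.1 i))
  refine Finset.sum_congr rfl fun i _ => ?_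
  by_cases hi : w.1 i = 0
  · simp only [hi, Finsupp.single_zero]
  · rw [h i hi]

theorem continuous_toFinProb_of_continuousOn {Z : Type*} [TopologicalSpace Z] {n : ℕ}
    {x : Z → Fin (n + 1) → X} {w : Z → stdSimplex ℝ (Fin (n + 1))} (hw : Continuous w)
    {V : Fin (n + 1) → Set Z} (hV : ∀ i, IsOpen (V i))
    (hwV : ∀ i, tsupport (fun z => (w z).1 i) ⊆ V i)
    (hx : ∀ i, ContinuousOn (fun z => x z i) (V i)) :
    Continuous fun z => toFinProb ⟨n, x z, w z⟩ := by
  classical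
  refine continuous_iff_continuousAt.mpr fun y => ?_
  obtain ⟨i₀, -, hi₀⟩ : ∃ i ∈ Finset.univ, (w y).1 i ≠ 0 :=
    Finset.exists_ne_zero_of_sum_ne_zero ((w y).2.2.symm ▸ one_ne_zero)
  -- Indices whose weight vanishes near `y` are redirected to `i₀`.
  let τ : Fin (n + 1) → Fin (n + 1) := fun i =>
    if y ∈ tsupport (fun z => (w z).1 i) then i else i₀
  have hτ : ∀ i, y ∈ tsupport (fun z => (w z).1 (τ i)) := fun i => by
    by_cases h : y ∈ tsupport (fun z => (w z).1 i)
    · simpa only [τ, if_pos h] using h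
    · simpa only [τ, if_neg h] using subset_tsupport (fun z => (w z).1 i₀) hi₀
  have hlift : ContinuousAt (fun z => toFinProb ⟨n, fun i => x z (τ i), w z⟩) y := by
    refine continuous_toFinProb.continuousAt.comp (continuous_sigmaMk.continuousAt.comp ?_)
    refine ContinuousAt.prodMk (continuousAt_pi.mpr fun i => ?_) hw.continuousAt
    exact (hx (τ i)).continuousAt ((hV (τ i)).mem_nhds (hwV (τ i) (hτ i)))
  have hvanish : ∀ᶠ z in nhds y, ∀ i, y ∉ tsupport (fun z => (w z).1 i) → (w z).1 i = 0 :=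
    Filter.eventually_all.mpr fun i => by
      by_cases h : y ∈ tsupport (fun z => (w z).1 i)
      · exact Filter.Eventually.of_forall fun _ h' => (h' h).elim
      · filter_upwards [notMem_tsupport_iff_eventuallyEq.mp h] with z hz using fun _ => hz
  refine hlift.congr (hvanish.mono fun z hz => ?_)
  refine (toFinProb_congr_of_weight_ne_zero fun i hi => ?_).symm
  by_cases h : y ∈ tsupport (fun z => (w z).1 i)
  · simp only [τ, if_pos h]
  · exact (hi (hz i h)).elim

end PreProb

theorem FinProb.supp_nonempty {X : Type u} [TopologicalSpace X] (μ : FinProb X) :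
    μ.supp.Nonempty := by
  refine Finset.nonempty_iff_ne_empty.mpr fun h => ?_
  have hsum := μ.2.2
  rw [Finsupp.support_eq_empty.mp h, Finsupp.sum_zero_index] at hsum
  exact zero_ne_one hsum

theorem FinProb.image_supp_eq_singleton {X : Type u} {Y : Type v} [TopologicalSpace X]
    {f : X → Y} {μ : FinProb X} {y : Y} (h : ∀ x ∈ μ.supp, f x = y) :
    f '' ↑μ.supp = {y} := by
  refine Set.eq_singleton_iff_unique_mem.mpr ⟨?_, ?_⟩
  · obtain ⟨x, hx⟩ := μ.supp_nonempty
    exact ⟨x, hx, h x hx⟩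
  · rintro _ ⟨x, hx, rfl⟩
    exact h x hx

theorem FinProbRel.proj_eq {X : Type u} {Y : Type v} [TopologicalSpace X] {f : X → Y}
    {μ : FinProbRel f} {y : Y} (h : f '' ↑(μ : FinProb X).supp = {y}) :
    FinProbRel.proj f μ = y :=
  Set.singleton_eq_singleton_iff.mp (μ.2.choose_spec.symm.trans h)

theorem hasAnalogSec_of_hasSecCover {X : Type u} {Y : Type v}
    [TopologicalSpace X] [TopologicalSpace Y] [T2Space Y] [ParacompactSpace Y]
    {f : X → Y} {n : ℕ} (h : HasSecCover f n) : HasAnalogSec f n := by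
  classical
  obtain ⟨U, hUo, hUc, hsec⟩ := h
  choose sec hsec_cont hsec_eq using hsec
  obtain ⟨φ, hφ⟩ := PartitionOfUnity.exists_isSubordinate isClosed_univ U hUo hUc.symm.subset
  have hcover : ∀ y, ∃ i, y ∈ U i := fun y => Set.mem_iUnion.mp (hUc ▸ Set.mem_univ y)
  choose j hj using hcover
  let x : Y → Fin (n + 1) → X := fun y i =>
    if h : y ∈ U i then sec i ⟨y, h⟩ else sec (j y) ⟨y, hj y⟩
  have hfx : ∀ y i, f (x y i) = y := fun y i => by
    by_cases h : y ∈ U i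
    · simp only [x, dif_pos h, hsec_eq]
    · simp only [x, dif_neg h, hsec_eq]
  let w : Y → stdSimplex ℝ (Fin (n + 1)) := fun y =>
    ⟨fun i => φ i y, fun i => φ.nonneg i y,
      (finsum_eq_sum_of_fintype _).symm.trans (φ.sum_eq_one (Set.mem_univ y))⟩
  have hw : Continuous w := (continuous_pi fun i => (φ i).continuous).subtype_mk _
  have hx : ∀ i, ContinuousOn (fun y => x y i) (U i) := fun i => by
    rw [continuousOn_iff_continuous_domRestrict]
    convert hsec_cont i using 1
    funext y
    simp only [Set.domRestrict_apply, x, dif_pos y.2]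
  let μ : Y → FinProb X := fun y => PreProb.toFinProb ⟨n, x y, w y⟩
  have hμ : ∀ y, f '' ↑(μ y).supp = {y} := fun y =>
    FinProb.image_supp_eq_singleton fun _ hx' => by
      obtain ⟨i, rfl⟩ := PreProb.exists_eq_of_mem_supp_toFinProb hx'
      exact hfx y i
  refine ⟨fun y => ⟨μ y, y, hμ y⟩, ?_, fun y => FinProbRel.proj_eq (hμ y),
    fun y => PreProb.card_supp_toFinProb_le _⟩
  exact (PreProb.continuous_toFinProb_of_continuousOn hw hUo (fun i => hφ i) hx).subtype_mk _

theorem asecat_le_secat_general {X : Type u} {Y : Type v}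
    [TopologicalSpace X] [TopologicalSpace Y] [T2Space Y]
    [ParacompactSpace Y] (f : X → Y) :
    asecat f ≤ secat f := by
  refine sInf_le_sInf ?_
  rintro _ ⟨m, rfl, hm⟩
  exact ⟨m, rfl, hasAnalogSec_of_hasSecCover hm⟩

/-- If `Y` is paracompact, then the analog sectional category of any map `f : X → Y` is
bounded above by its classical sectional category (Schwarz genus). -/
theorem asecat_le_secat {X : Type u} {Y : Type v}
    [TopologicalSpace X] [TopologicalSpace Y] [T2Space X] [T2Space Y]
    [CompactlyGeneratedSpace X] [CompactlyGeneratedSpace Y]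
    [ParacompactSpace Y] (f : X → Y) :
    asecat f ≤ secat f :=
  asecat_le_secat_general f

end
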